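/- Let 0 < μ₁ ≤ μ₂ be constants and α < β real numbers with β − α = π/√μ₂. Let p : (α,β) → ℝ be measurable with μ₁ ≤ p(t) ≤ μ₂ for almost every t ∈ (α,β), and let v : [α,β] → ℝ be continuous, C¹ on (α,β), belonging to H²_loc(α,β), satisfying v''(t) + p(t)v(t) = 0 for almost every t ∈ (α,β), with v(α) = v(β) = 0 and v(t) > 0 for all t ∈ (α,β). Then p(t) = μ₂ for almost every t ∈ (α,β), and there exists a constant c > 0 such that v(t) = c·sin(√μ₂·(t − α)) for every t ∈ [α,β]. -/

import Mathlib

/-!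
Put `s t = sin (√μ₂ * (t - α))`, so that `s'' = -μ₂ s`, `s > 0` on `(α, β)` and `s` vanishes at
both ends. The Wronskian `W = v' s - v s'` is absolutely continuous on compact subintervals with
`W' = (μ₂ - p) v s ≥ 0` a.e., and it extends continuously by `0` to both endpoints (`v'` extends
because `v''` is bounded). Hence `∫_α^β (μ₂ - p) v s = W β - W α = 0`, which forces `p = μ₂` a.e.
and then `W ≡ 0`, i.e. `(v / s)' = W / s² = 0`.
-/

open Real Set MeasureTheory intervalIntegral

theorem wronskian_sub_eq_integral {u u' g w w' w'' : ℝ → ℝ} {a b : ℝ}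
    (hg : IntervalIntegrable g volume a b)
    (hu : ∀ t ∈ uIcc a b, HasDerivAt u (u' t) t)
    (hu' : ∀ t ∈ uIcc a b, u' t = u' a + ∫ x in a..t, g x)
    (hw : ∀ t, HasDerivAt w (w' t) t) (hw' : ∀ t, HasDerivAt w' (w'' t) t)
    (hw'' : Continuous w'') :
    (u' b * w b - u b * w' b) - (u' a * w a - u a * w' a) =
      ∫ t in a..b, (g t * w t - u t * w'' t) := by
  have hU_ac : AbsolutelyContinuousOnInterval (fun t => u' a + ∫ x in a..t, g x) a b :=
    (contDiffOn_const (c := u' a)).absolutelyContinuousOnInterval.add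
      (hg.absolutelyContinuousOnInterval_intervalIntegral left_mem_uIcc)
  have hw_ac : AbsolutelyContinuousOnInterval w a b := by
    refine (contDiff_one_iff_deriv.2 ⟨fun t => (hw t).differentiableAt, ?_⟩).contDiffOn
      |>.absolutelyContinuousOnInterval
    rw [show deriv w = w' from funext fun t => (hw t).deriv]
    exact continuous_iff_continuousAt.2 fun t => (hw' t).continuousAt
  have hw_cont : ContinuousOn w (uIcc a b) := hw_ac.continuousOn
  have hw'_cont : ContinuousOn w' (uIcc a b) :=
    fun t _ => (hw' t).continuousAt.continuousWithinAt
  have hu'_cont : ContinuousOn u' (uIcc a b) := hU_ac.continuousOn.congr hu'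
  have hu_cont : ContinuousOn u (uIcc a b) := fun t ht => (hu t ht).continuousAt.continuousWithinAt
  have hgw : IntervalIntegrable (fun t => g t * w t + u' t * w' t) volume a b :=
    (hg.mul_continuousOn hw_cont).add (hu'_cont.mul hw'_cont).intervalIntegrable
  have huw : IntervalIntegrable (fun t => u' t * w' t + u t * w'' t) volume a b :=
    ((hu'_cont.mul hw'_cont).add (hu_cont.mul hw''.continuousOn)).intervalIntegrable
  -- `u'` agrees on `[a, b]` with the absolutely continuous primitive `u' a + ∫ g`
  have hg_parts : ∫ t in a..b, (g t * w t + u' t * w' t) = u' b * w b - u' a * w a := by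
    have h := hU_ac.integral_deriv_mul_eq_sub hw_ac
    rw [integral_same, add_zero, ← hu' b right_mem_uIcc] at h
    rw [← h]
    refine integral_congr_ae ?_
    filter_upwards [hg.ae_hasDerivAt_integral] with t ht htab
    rw [((ht (uIoc_subset_uIcc htab) a left_mem_uIcc).const_add (u' a)).deriv, (hw t).deriv,
      hu' t (uIoc_subset_uIcc htab)]
  have hu_parts : ∫ t in a..b, (u' t * w' t + u t * w'' t) = u b * w' b - u a * w' a :=
    integral_eq_sub_of_hasDerivAt (fun t ht => (hu t ht).mul (hw' t)) huw
  rw [show (fun t => g t * w t - u t * w'' t) =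
      fun t => (g t * w t + u' t * w' t) - (u' t * w' t + u t * w'' t) by ext; ring,
    integral_sub hgw huw, hg_parts, hu_parts]
  ring

theorem exists_continuousOn_Icc_eqOn_Ioo_of_sub_eq_integral {f g : ℝ → ℝ} {a b : ℝ}
    (hab : a < b) (hg : IntegrableOn g (Icc a b))
    (hf : ∀ x ∈ Ioo a b, ∀ y ∈ Ioo a b, f y - f x = ∫ t in x..y, g t) :
    ∃ F : ℝ → ℝ, ContinuousOn F (Icc a b) ∧ EqOn f F (Ioo a b) := by
  obtain ⟨c, hc⟩ := nonempty_Ioo.2 hab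
  rw [← uIcc_of_le hab.le] at hg ⊢
  refine ⟨fun y => f c + ∫ t in c..y, g t, continuousOn_const.add
    (continuousOn_primitive_interval' hg.intervalIntegrable ?_), fun y hy => ?_⟩
  · exact uIcc_of_le hab.le ▸ Ioo_subset_Icc_self hc
  · simp only [← hf c hc y hy, add_sub_cancel]

theorem sub_eq_integral_of_continuousOn_Icc {f g : ℝ → ℝ} {a b : ℝ} (hab : a < b)
    (hf : ContinuousOn f (Icc a b)) (hg : IntegrableOn g (Icc a b))
    (hfg : ∀ x ∈ Ioo a b, ∀ y ∈ Ioo a b, f y - f x = ∫ t in x..y, g t) :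
    ∀ x ∈ Icc a b, ∀ y ∈ Icc a b, f y - f x = ∫ t in x..y, g t := by
  obtain ⟨c, hc⟩ := nonempty_Ioo.2 hab
  have hc' : c ∈ uIcc a b := uIcc_of_le hab.le ▸ Ioo_subset_Icc_self hc
  rw [← uIcc_of_le hab.le] at hf hg ⊢
  have hgi : ∀ x ∈ uIcc a b, IntervalIntegrable g volume c x := fun x hx =>
    (hg.mono_set (uIcc_subset_uIcc hc' hx)).intervalIntegrable
  have heq : EqOn (fun y => f y - f c) (fun y => ∫ t in c..y, g t) (uIcc a b) :=
    EqOn.of_subset_closure (s := Ioo a b) (fun y hy => hfg c hc y hy)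
      (hf.sub continuousOn_const) (continuousOn_primitive_interval' hg.intervalIntegrable hc')
      (uIcc_of_le hab.le ▸ Ioo_subset_Icc_self) (by rw [closure_Ioo hab.ne, uIcc_of_le hab.le])
  intro x hx y hy
  have hx' : f x - f c = ∫ t in c..x, g t := heq hx
  have hy' : f y - f c = ∫ t in c..y, g t := heq hy
  rw [← integral_interval_sub_left (hgi y hy) (hgi x hx), ← hx', ← hy']
  ring

theorem exists_wronskian_sub_eq_integral_Icc {u u' g w w' w'' : ℝ → ℝ} {a b : ℝ} (hab : a < b)
    (hg : IntegrableOn g (Icc a b)) (hu_cont : ContinuousOn u (Icc a b))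
    (hu : ∀ t ∈ Ioo a b, HasDerivAt u (u' t) t)
    (hu' : ∀ x ∈ Ioo a b, ∀ y ∈ Ioo a b, u' y - u' x = ∫ t in x..y, g t)
    (hw : ∀ t, HasDerivAt w (w' t) t) (hw' : ∀ t, HasDerivAt w' (w'' t) t)
    (hw'' : Continuous w'') :
    ∃ U : ℝ → ℝ, EqOn u' U (Ioo a b) ∧ ∀ x ∈ Icc a b, ∀ y ∈ Icc a b,
      (U y * w y - u y * w' y) - (U x * w x - u x * w' x) =
        ∫ t in x..y, (g t * w t - u t * w'' t) := by
  obtain ⟨U, hU_cont, hU⟩ := exists_continuousOn_Icc_eqOn_Ioo_of_sub_eq_integral hab hg hu'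
  have hw_cont : Continuous w := continuous_iff_continuousAt.2 fun t => (hw t).continuousAt
  have hw'_cont : Continuous w' := continuous_iff_continuousAt.2 fun t => (hw' t).continuousAt
  refine ⟨U, hU, sub_eq_integral_of_continuousOn_Icc hab
    ((hU_cont.mul hw_cont.continuousOn).sub (hu_cont.mul hw'_cont.continuousOn))
    ((hg.mul_continuousOn hw_cont.continuousOn isCompact_Icc).sub
      (hu_cont.mul hw''.continuousOn).integrableOn_Icc) fun x hx y hy => ?_⟩
  have hxy : uIcc x y ⊆ Ioo a b := Icc_subset_Ioo (lt_min hx.1 hy.1) (max_lt hx.2 hy.2)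
  rw [← hU hx, ← hU hy]
  refine wronskian_sub_eq_integral
    (hg.mono_set (hxy.trans Ioo_subset_Icc_self)).intervalIntegrable
    (fun t ht => hu t (hxy ht)) (fun t ht => ?_) hw hw' hw''
  rw [← hu' x hx t (hxy ht)]
  ring

theorem integrableOn_Icc_mul_of_ae_abs_le {p f : ℝ → ℝ} {a b C : ℝ} (hp : Measurable p)
    (hpC : ∀ᵐ t ∂volume.restrict (Ioo a b), |p t| ≤ C) (hf : ContinuousOn f (Icc a b)) :
    IntegrableOn (fun t => p t * f t) (Icc a b) :=
  hf.integrableOn_Icc.bdd_mul hp.aestronglyMeasurable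
    (by rwa [Measure.restrict_congr_set Ioo_ae_eq_Icc] at hpC)

theorem ae_eq_of_integral_sub_mul_eq_zero {p f : ℝ → ℝ} {a b μ : ℝ} (hab : a ≤ b)
    (hint : IntegrableOn (fun t => (μ - p t) * f t) (Ioo a b))
    (hp : ∀ᵐ t ∂volume.restrict (Ioo a b), p t ≤ μ) (hf : ∀ t ∈ Ioo a b, 0 < f t)
    (h0 : ∫ t in a..b, (μ - p t) * f t = 0) :
    ∀ᵐ t ∂volume.restrict (Ioo a b), p t = μ := by
  have hnonneg : 0 ≤ᵐ[volume.restrict (Ioo a b)] fun t => (μ - p t) * f t := by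
    filter_upwards [hp, ae_restrict_mem measurableSet_Ioo] with t hpt ht
    exact mul_nonneg (sub_nonneg.2 hpt) (hf t ht).le
  rw [integral_of_le hab, integral_Ioc_eq_integral_Ioo,
    integral_eq_zero_iff_of_nonneg_ae hnonneg hint] at h0
  filter_upwards [h0, ae_restrict_mem measurableSet_Ioo] with t ht0 ht
  have := (mul_eq_zero.1 ht0).resolve_right (hf t ht).ne'
  linarith

theorem exists_eq_const_mul_of_wronskian_eq_zero {u u' w w' : ℝ → ℝ} {s : Set ℝ}
    (hs : IsOpen s) (hs' : IsPreconnected s) (hu : ∀ t ∈ s, HasDerivAt u (u' t) t)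
    (hw : ∀ t ∈ s, HasDerivAt w (w' t) t) (hw0 : ∀ t ∈ s, w t ≠ 0)
    (hW : ∀ t ∈ s, u' t * w t - u t * w' t = 0) : ∃ c, ∀ t ∈ s, u t = c * w t := by
  have hquot : ∀ t ∈ s, HasDerivAt (fun t => u t / w t) 0 t := fun t ht => by
    have h := (hu t ht).div (hw t ht) (hw0 t ht)
    rwa [hW t ht, zero_div] at h
  obtain ⟨c, hc⟩ := hs.exists_is_const_of_deriv_eq_zero hs'
    (fun t ht => (hquot t ht).differentiableAt.differentiableWithinAt)
    (fun t ht => (hquot t ht).deriv)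
  exact ⟨c, fun t ht => by rw [← hc t ht, div_mul_cancel₀ _ (hw0 t ht)]⟩

theorem sturm_comparison_rigidity {p u u' w w' : ℝ → ℝ} {a b μ₁ μ : ℝ} (hab : a < b)
    (hp_meas : Measurable p) (hp : ∀ᵐ t ∂volume.restrict (Ioo a b), μ₁ ≤ p t ∧ p t ≤ μ)
    (hu_cont : ContinuousOn u (Icc a b)) (hu : ∀ t ∈ Ioo a b, HasDerivAt u (u' t) t)
    (hu' : ∀ x ∈ Ioo a b, ∀ y ∈ Ioo a b, u' y - u' x = ∫ t in x..y, -p t * u t)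
    (hua : u a = 0) (hub : u b = 0) (hu_pos : ∀ t ∈ Ioo a b, 0 < u t)
    (hw : ∀ t, HasDerivAt w (w' t) t) (hw' : ∀ t, HasDerivAt w' (-(μ * w t)) t)
    (hwa : w a = 0) (hwb : w b = 0) (hw_pos : ∀ t ∈ Ioo a b, 0 < w t) :
    (∀ᵐ t ∂volume.restrict (Ioo a b), p t = μ) ∧
      ∃ c, 0 < c ∧ ∀ t ∈ Icc a b, u t = c * w t := by
  have hw_cont : Continuous w := continuous_iff_continuousAt.2 fun t => (hw t).continuousAt
  have hg : IntegrableOn (fun t => -p t * u t) (Icc a b) := by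
    refine integrableOn_Icc_mul_of_ae_abs_le (C := max |μ₁| |μ|) hp_meas.neg ?_ hu_cont
    filter_upwards [hp] with t ht
    rw [abs_neg]
    exact abs_le_max_abs_abs ht.1 ht.2
  have hK_int : IntegrableOn (fun t => (μ - p t) * (u t * w t)) (Icc a b) := by
    refine integrableOn_Icc_mul_of_ae_abs_le (C := μ - μ₁) (hp_meas.const_sub μ) ?_
      (hu_cont.mul hw_cont.continuousOn)
    filter_upwards [hp] with t ht
    exact abs_le.2 ⟨by linarith [ht.1], by linarith [ht.2]⟩
  obtain ⟨U, hU, hW⟩ := exists_wronskian_sub_eq_integral_Icc hab hg hu_cont hu hu' hw hw'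
    (continuous_const.mul hw_cont).neg
  have hK : ∀ x ∈ Icc a b, ∀ y ∈ Icc a b, (U y * w y - u y * w' y) - (U x * w x - u x * w' x) =
      ∫ t in x..y, (μ - p t) * (u t * w t) := fun x hx y hy => by
    rw [hW x hx y hy]
    congr 1 with t
    ring
  have hp_eq : ∀ᵐ t ∂volume.restrict (Ioo a b), p t = μ :=
    ae_eq_of_integral_sub_mul_eq_zero hab.le (hK_int.mono_set Ioo_subset_Icc_self)
      (hp.mono fun t ht => ht.2) (fun t ht => mul_pos (hu_pos t ht) (hw_pos t ht))
      (by rw [← hK a (left_mem_Icc.2 hab.le) b (right_mem_Icc.2 hab.le), hua, hub, hwa, hwb]; ring)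
  refine ⟨hp_eq, ?_⟩
  have hW0 : ∀ t ∈ Ioo a b, u' t * w t - u t * w' t = 0 := fun t ht => by
    have hKt := hK a (left_mem_Icc.2 hab.le) t (Ioo_subset_Icc_self ht)
    have hK0 : ∫ s in a..t, (μ - p s) * (u s * w s) = 0 := by
      rw [integral_of_le ht.1.le, integral_Ioc_eq_integral_Ioo]
      refine integral_eq_zero_of_ae ?_
      filter_upwards [ae_restrict_of_ae_restrict_of_subset (Ioo_subset_Ioo_right ht.2.le) hp_eq]
        with s hs
      simp [hs]
    rw [hK0, hua, hwa] at hKt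
    rw [hU ht]
    linarith
  obtain ⟨c, hc⟩ := exists_eq_const_mul_of_wronskian_eq_zero isOpen_Ioo isPreconnected_Ioo hu
    (fun t _ => hw t) (fun t ht => (hw_pos t ht).ne') hW0
  obtain ⟨m, hm⟩ := nonempty_Ioo.2 hab
  refine ⟨c, (mul_pos_iff_of_pos_right (hw_pos m hm)).1 (hc m hm ▸ hu_pos m hm), ?_⟩
  exact EqOn.of_subset_closure hc hu_cont (continuous_const.mul hw_cont).continuousOn
    Ioo_subset_Icc_self (closure_Ioo hab.ne).ge

theorem hasDerivAt_sin_mul_sub (σ α t : ℝ) :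
    HasDerivAt (fun t => sin (σ * (t - α))) (σ * cos (σ * (t - α))) t :=
  (((hasDerivAt_id' t).sub_const α).const_mul σ).sin.congr_deriv (by ring)

theorem hasDerivAt_sqrt_mul_cos_mul_sub {μ : ℝ} (hμ : 0 ≤ μ) (α t : ℝ) :
    HasDerivAt (fun t => √μ * cos (√μ * (t - α))) (-(μ * sin (√μ * (t - α)))) t :=
  (((hasDerivAt_id' t).sub_const α).const_mul √μ).cos.const_mul √μ |>.congr_deriv (by
    linear_combination (-sin (√μ * (t - α))) * mul_self_sqrt hμ)

theorem sin_mul_sub_pos {σ α β t : ℝ} (hσ : 0 < σ) (hβ : σ * (β - α) = π) (ht : t ∈ Ioo α β) :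
    0 < sin (σ * (t - α)) :=
  sin_pos_of_pos_of_lt_pi (mul_pos hσ (sub_pos.2 ht.1))
    (hβ ▸ mul_lt_mul_of_pos_left (by linarith [ht.2]) hσ)

theorem statement14_general
    (μ₁ μ₂ : ℝ)
    (α β : ℝ) (hαβ : α < β) (hlen : β - α = π / Real.sqrt μ₂)
    (p : ℝ → ℝ) (hp_meas : Measurable p)
    (hp_bounds : ∀ᵐ t ∂(volume.restrict (Ioo α β)), μ₁ ≤ p t ∧ p t ≤ μ₂)
    (v v' : ℝ → ℝ)
    (hv_cont : ContinuousOn v (Icc α β))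
    (hv_deriv : ∀ t ∈ Ioo α β, HasDerivAt v (v' t) t)
    -- v ∈ H²loc and v'' + p v = 0 a.e., in integrated form:
    (hv'' : ∃ v'' : ℝ → ℝ,
      (∀ a ∈ Ioo α β, ∀ b ∈ Ioo α β, v' b - v' a = ∫ t in a..b, v'' t) ∧
      (∀ᵐ t ∂(volume.restrict (Ioo α β)), v'' t + p t * v t = 0))
    (hvα : v α = 0) (hvβ : v β = 0)
    (hv_pos : ∀ t ∈ Ioo α β, 0 < v t) :
    (∀ᵐ t ∂(volume.restrict (Ioo α β)), p t = μ₂) ∧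
    ∃ c : ℝ, 0 < c ∧ ∀ t ∈ Icc α β, v t = c * Real.sin (Real.sqrt μ₂ * (t - α)) := by
  have hσ : 0 < √μ₂ := (div_pos_iff_of_pos_left pi_pos).1 (hlen ▸ sub_pos.2 hαβ)
  have hσβ : √μ₂ * (β - α) = π := by rw [hlen]; field_simp
  obtain ⟨v'', hv''_int, hv''_eq⟩ := hv''
  have hv'_sub : ∀ x ∈ Ioo α β, ∀ y ∈ Ioo α β, v' y - v' x = ∫ t in x..y, -p t * v t := by
    intro x hx y hy
    rw [hv''_int x hx y hy]
    refine integral_congr_ae ?_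
    filter_upwards [(ae_restrict_iff' measurableSet_Ioo).1 hv''_eq] with t ht htxy
    have := ht (Icc_subset_Ioo (lt_min hx.1 hy.1) (max_lt hx.2 hy.2) (uIoc_subset_uIcc htxy))
    linarith
  exact sturm_comparison_rigidity hαβ hp_meas hp_bounds hv_cont hv_deriv hv'_sub hvα hvβ hv_pos
    (hasDerivAt_sin_mul_sub _ α) (hasDerivAt_sqrt_mul_cos_mul_sub (sqrt_pos.1 hσ).le α)
    (by simp) (by rw [hσβ, sin_pi]) (fun t ht => sin_mul_sub_pos hσ hσβ ht)

theorem statement14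
    (μ₁ μ₂ : ℝ) (hμ₁ : 0 < μ₁) (hμ : μ₁ ≤ μ₂)
    (α β : ℝ) (hαβ : α < β) (hlen : β - α = π / Real.sqrt μ₂)
    (p : ℝ → ℝ) (hp_meas : Measurable p)
    (hp_bounds : ∀ᵐ t ∂(volume.restrict (Ioo α β)), μ₁ ≤ p t ∧ p t ≤ μ₂)
    (v v' : ℝ → ℝ)
    (hv_cont : ContinuousOn v (Icc α β))
    (hv_deriv : ∀ t ∈ Ioo α β, HasDerivAt v (v' t) t)
    (hv'_cont : ContinuousOn v' (Ioo α β))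
    -- v ∈ H²loc and v'' + p v = 0 a.e., in integrated form:
    (hv'' : ∃ v'' : ℝ → ℝ,
      (∀ a ∈ Ioo α β, ∀ b ∈ Ioo α β, v' b - v' a = ∫ t in a..b, v'' t) ∧
      (∀ᵐ t ∂(volume.restrict (Ioo α β)), v'' t + p t * v t = 0))
    (hvα : v α = 0) (hvβ : v β = 0)
    (hv_pos : ∀ t ∈ Ioo α β, 0 < v t) :
    (∀ᵐ t ∂(volume.restrict (Ioo α β)), p t = μ₂) ∧
    ∃ c : ℝ, 0 < c ∧ ∀ t ∈ Icc α β, v t = c * Real.sin (Real.sqrt μ₂ * (t - α)) :=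
  statement14_general μ₁ μ₂ α β hαβ hlen p hp_meas hp_bounds v v' hv_cont hv_deriv hv'' hvα hvβ
    hv_pos
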